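/- arXiv:2109.04937 — 4 statements merged into one kernel-verified Lean document; each statement's English description precedes it below -/
import Mathlib

section
/- The function I = k2·(y·pz − z·py) + k3·(z·px − x·pz) + k4·(x·py − y·px) has vanishing Poisson bracket with H_μ = (1/(1−λr²))·[ (px²+py²+pz²)/2 + k1(x²+y²+z²) + k2 x + k3 y + k4 z ], where r² = x²+y²+z². -/
noncomputable section

/-- Phase space ℝ⁶ with coordinates (x,y,z,px,py,pz). -/
abbrev Pt := Fin 6 → ℝ

/-- Standard basis vector. -/
def e (j : Fin 6) : Pt := Pi.single j 1

/-- Canonical Poisson bracket on ℝ⁶: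
{F,G} = Σᵢ (∂F/∂qᵢ ∂G/∂pᵢ − ∂F/∂pᵢ ∂G/∂qᵢ). -/
def pb (F G : Pt → ℝ) (q : Pt) : ℝ :=
    (fderiv ℝ F q (e 0)) * (fderiv ℝ G q (e 3)) - (fderiv ℝ F q (e 3)) * (fderiv ℝ G q (e 0))
  + (fderiv ℝ F q (e 1)) * (fderiv ℝ G q (e 4)) - (fderiv ℝ F q (e 4)) * (fderiv ℝ G q (e 1))
  + (fderiv ℝ F q (e 2)) * (fderiv ℝ G q (e 5)) - (fderiv ℝ F q (e 5)) * (fderiv ℝ G q (e 2))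

/-- H_μ = (1/(1−λr²))·[(px²+py²+pz²)/2 + k1 r² + k2 x + k3 y + k4 z]. -/
def Hmu (lam k1 k2 k3 k4 : ℝ) (q : Pt) : ℝ :=
  (1 / (1 - lam * (q 0 ^ 2 + q 1 ^ 2 + q 2 ^ 2))) *
    ((q 3 ^ 2 + q 4 ^ 2 + q 5 ^ 2) / 2 + k1 * (q 0 ^ 2 + q 1 ^ 2 + q 2 ^ 2)
      + k2 * q 0 + k3 * q 1 + k4 * q 2)

/-- I = k2·(y pz − z py) + k3·(z px − x pz) + k4·(x py − y px). -/
def Ifun (k2 k3 k4 : ℝ) (q : Pt) : ℝ :=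
  k2 * (q 1 * q 5 - q 2 * q 4) + k3 * (q 2 * q 3 - q 0 * q 5) + k4 * (q 0 * q 4 - q 1 * q 3)

/-!
`Ifun k2 k3 k4` is the component `k · (q × p)` of the angular momentum along the axis
`k = (k2, k3, k4)`, so its Hamiltonian vector field rotates position and momentum together
about `k`. The Hamiltonian `Hmu` depends only on `|q|²`, `|p|²` and `k · q`, which are invariant
under these rotations; hence its derivative along the field, which is the bracket, vanishes.
-/

/-- `(q × k, p × k)`: the infinitesimal rotation about `k = (k2, k3, k4)` of `(q, p)`. -/
def rotationField (k2 k3 k4 : ℝ) (q : Pt) : Pt :=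
  ![q 1 * k4 - q 2 * k3, q 2 * k2 - q 0 * k4, q 0 * k3 - q 1 * k2,
    q 4 * k4 - q 5 * k3, q 5 * k2 - q 3 * k4, q 3 * k3 - q 4 * k2]

def axialInvariants (k2 k3 k4 : ℝ) (q : Pt) : ℝ × ℝ × ℝ :=
  (q 0 ^ 2 + q 1 ^ 2 + q 2 ^ 2, q 3 ^ 2 + q 4 ^ 2 + q 5 ^ 2, k2 * q 0 + k3 * q 1 + k4 * q 2)

def hmuProfile (lam k1 : ℝ) (u : ℝ × ℝ × ℝ) : ℝ :=
  1 / (1 - lam * u.1) * (u.2.1 / 2 + k1 * u.1 + u.2.2)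

section

variable (k2 k3 k4 : ℝ) (q : Pt)

lemma fderiv_Ifun_apply (v : Pt) :
    fderiv ℝ (Ifun k2 k3 k4) q v =
      k2 * (v 1 * q 5 + q 1 * v 5 - (v 2 * q 4 + q 2 * v 4))
        + k3 * (v 2 * q 3 + q 2 * v 3 - (v 0 * q 5 + q 0 * v 5))
        + k4 * (v 0 * q 4 + q 0 * v 4 - (v 1 * q 3 + q 1 * v 3)) := by
  unfold Ifun
  simp (disch := fun_prop) only [fderiv_fun_add, fderiv_fun_sub, fderiv_fun_mul, fderiv_fun_const,
    fderiv_apply, fderiv_fun_id, ContinuousLinearMap.comp_id, ContinuousLinearMap.proj_apply,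
    add_apply, sub_apply, smul_apply, Pi.zero_apply, zero_apply, smul_eq_mul]
  ring

lemma rotationField_eq_sum :
    rotationField k2 k3 k4 q =
      (q 1 * k4 - q 2 * k3) • e 0 + (q 2 * k2 - q 0 * k4) • e 1 + (q 0 * k3 - q 1 * k2) • e 2
        + (q 4 * k4 - q 5 * k3) • e 3 + (q 5 * k2 - q 3 * k4) • e 4
        + (q 3 * k3 - q 4 * k2) • e 5 := by
  ext j
  fin_cases j <;> simp [rotationField, e]

theorem pb_Ifun_eq_fderiv_rotationField (G : Pt → ℝ) :
    pb (Ifun k2 k3 k4) G q = fderiv ℝ G q (rotationField k2 k3 k4 q) := by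
  simp only [pb, fderiv_Ifun_apply, rotationField_eq_sum, map_add, map_smul, smul_eq_mul]
  simp only [e, Pi.single_apply, Fin.reduceEq, if_true, if_false]
  ring

lemma fderiv_axialInvariants_rotationField :
    fderiv ℝ (axialInvariants k2 k3 k4) q (rotationField k2 k3 k4 q) = 0 := by
  unfold axialInvariants
  rw [DifferentiableAt.fderiv_prodMk (by fun_prop) (by fun_prop),
    DifferentiableAt.fderiv_prodMk (by fun_prop) (by fun_prop)]
  simp (disch := fun_prop) only [sq, fderiv_fun_add, fderiv_fun_mul, fderiv_fun_const,
    fderiv_apply, fderiv_fun_id, ContinuousLinearMap.comp_id, ContinuousLinearMap.proj_apply,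
    ContinuousLinearMap.prod_apply, add_apply, smul_apply, Pi.zero_apply, zero_apply, smul_eq_mul,
    rotationField, Matrix.cons_val, Prod.mk_eq_zero]
  refine ⟨by ring, by ring, by ring⟩

theorem pb_Ifun_comp_axialInvariants {g : ℝ × ℝ × ℝ → ℝ}
    (hg : DifferentiableAt ℝ g (axialInvariants k2 k3 k4 q)) :
    pb (Ifun k2 k3 k4) (g ∘ axialInvariants k2 k3 k4) q = 0 := by
  rw [pb_Ifun_eq_fderiv_rotationField, fderiv_comp q hg (by unfold axialInvariants; fun_prop),
    ContinuousLinearMap.comp_apply, fderiv_axialInvariants_rotationField, map_zero]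

end

lemma Hmu_eq_comp (lam k1 k2 k3 k4 : ℝ) :
    Hmu lam k1 k2 k3 k4 = hmuProfile lam k1 ∘ axialInvariants k2 k3 k4 := by
  ext q
  simp only [Hmu, hmuProfile, axialInvariants, Function.comp_apply]
  ring

theorem stmt0 (lam k1 k2 k3 k4 : ℝ) :
    ∀ q : Pt, 1 - lam * (q 0 ^ 2 + q 1 ^ 2 + q 2 ^ 2) > 0 →
      pb (Ifun k2 k3 k4) (Hmu lam k1 k2 k3 k4) q = 0 := by
  intro q hq
  rw [Hmu_eq_comp]
  refine pb_Ifun_comp_axialInvariants k2 k3 k4 q ?_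
  unfold hmuProfile
  fun_prop (disch := exact hq.ne')
end
end

section
/- For H_μ = (1/(1−λr²))·[ (px²+py²+pz²)/2 + k1 r² + k2 x + k3 y + k4 z ] with r² = x²+y²+z², the function K_xx = px² + 2(k1 x² + k2 x) + 2λ x² H_μ satisfies {K_xx, H_μ} = 0. -/
noncomputable section

/-- K_xx = px² + 2(k1 x² + k2 x) + 2λ x² H_μ. -/
def Kxx (lam k1 k2 k3 k4 : ℝ) (q : Pt) : ℝ :=
  q 3 ^ 2 + 2 * (k1 * q 0 ^ 2 + k2 * q 0) + 2 * lam * q 0 ^ 2 * Hmu lam k1 k2 k3 k4 q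


/-! Since `{·, H}` is a derivation and `{H, H} = 0`, writing `K = pₓ² + 2(k₁x² + k₂x) + 2λx²·H`
gives `{K, H} = 2pₓ{pₓ, H} + (4k₁x + 2k₂ + 4λx·H){x, H}`. With `D = 1 - λr²` one has
`{x, H} = ∂H/∂pₓ = pₓ/D` and `{pₓ, H} = -∂H/∂x = -(2k₁x + k₂ + 2λx·H)/D`, and the two terms
cancel. -/

open ContinuousLinearMap

section PoissonBracket

variable {F G H : Pt → ℝ} {q : Pt}

theorem pb_self : pb F F q = 0 := by
  unfold pb; ring

theorem pb_add_left (hF : DifferentiableAt ℝ F q) (hG : DifferentiableAt ℝ G q) :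
    pb (fun q => F q + G q) H q = pb F H q + pb G H q := by
  unfold pb; rw [fderiv_fun_add hF hG]; simp only [add_apply]; ring

theorem pb_mul_left (hF : DifferentiableAt ℝ F q) (hG : DifferentiableAt ℝ G q) :
    pb (fun q => F q * G q) H q = F q * pb G H q + G q * pb F H q := by
  unfold pb; rw [fderiv_fun_mul hF hG]; simp only [add_apply, smul_apply, smul_eq_mul]; ring

theorem pb_comp_left {φ : ℝ → ℝ} {φ' : ℝ} (hφ : HasDerivAt φ φ' (F q))
    (hF : DifferentiableAt ℝ F q) : pb (fun q => φ (F q)) G q = φ' * pb F G q := by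
  unfold pb
  rw [HasFDerivAt.fderiv (f := fun q => φ (F q)) (hφ.comp_hasFDerivAt q hF.hasFDerivAt)]
  simp only [smul_apply, smul_eq_mul]; ring

theorem fderiv_coord (i : Fin 6) (q : Pt) : fderiv ℝ (fun q : Pt => q i) q = proj i :=
  (hasFDerivAt_apply i q).fderiv

theorem pb_coord_zero_left : pb (fun q => q 0) G q = fderiv ℝ G q (e 3) := by
  simp [pb, fderiv_coord, e]

theorem pb_coord_three_left : pb (fun q => q 3) G q = -fderiv ℝ G q (e 0) := by
  simp [pb, fderiv_coord, e]

end PoissonBracket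

section Hamiltonian

variable {lam k1 k2 k3 k4 : ℝ} {q : Pt}

theorem hasFDerivAt_Hmu (hD : 1 - lam * (q 0 ^ 2 + q 1 ^ 2 + q 2 ^ 2) ≠ 0) :
    HasFDerivAt (Hmu lam k1 k2 k3 k4)
      ((1 - lam * (q 0 ^ 2 + q 1 ^ 2 + q 2 ^ 2))⁻¹ •
        (((2 * k1 * q 0 + k2 + 2 * lam * q 0 * Hmu lam k1 k2 k3 k4 q) • proj 0
          + (2 * k1 * q 1 + k3 + 2 * lam * q 1 * Hmu lam k1 k2 k3 k4 q) • proj 1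
          + (2 * k1 * q 2 + k4 + 2 * lam * q 2 * Hmu lam k1 k2 k3 k4 q) • proj 2
          + q 3 • proj 3 + q 4 • proj 4 + q 5 • proj 5 : Pt →L[ℝ] ℝ))) q := by
  have hc (i : Fin 6) := hasFDerivAt_apply (𝕜 := ℝ) i q
  have hr (a b c : Fin 6) := (((hc a).pow 2).add ((hc b).pow 2)).add ((hc c).pow 2)
  have hinv := (hasDerivAt_inv hD).comp_hasFDerivAt q
    ((hasFDerivAt_const 1 q).sub ((hr 0 1 2).const_mul lam))
  have hN := (((((hr 3 4 5).mul_const 2⁻¹).add ((hr 0 1 2).const_mul k1)).add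
    ((hc 0).const_mul k2)).add ((hc 1).const_mul k3)).add ((hc 2).const_mul k4)
  have hHmu : Hmu lam k1 k2 k3 k4 = fun q =>
      (1 - lam * (q 0 ^ 2 + q 1 ^ 2 + q 2 ^ 2))⁻¹ * ((q 3 ^ 2 + q 4 ^ 2 + q 5 ^ 2) * 2⁻¹ +
        k1 * (q 0 ^ 2 + q 1 ^ 2 + q 2 ^ 2) + k2 * q 0 + k3 * q 1 + k4 * q 2) := by
    funext q; simp only [Hmu, div_eq_mul_inv, one_mul]
  rw [hHmu]
  refine (hinv.mul hN).congr_fderiv ?_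
  ext v
  simp only [Fin.isValue, Pi.add_apply, Function.comp_apply, Pi.sub_apply, Nat.add_one_sub_one,
    pow_one, nsmul_eq_mul, Nat.cast_ofNat, smul_add, zero_sub, neg_add_rev, smul_neg, neg_smul,
    neg_neg, add_apply, smul_apply, proj_apply, smul_eq_mul]
  field_simp
  ring

theorem fderiv_Hmu_e_zero (hD : 1 - lam * (q 0 ^ 2 + q 1 ^ 2 + q 2 ^ 2) ≠ 0) :
    fderiv ℝ (Hmu lam k1 k2 k3 k4) q (e 0) =
      (2 * k1 * q 0 + k2 + 2 * lam * q 0 * Hmu lam k1 k2 k3 k4 q) /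
        (1 - lam * (q 0 ^ 2 + q 1 ^ 2 + q 2 ^ 2)) := by
  simp [(hasFDerivAt_Hmu hD).fderiv, e, div_eq_inv_mul]

theorem fderiv_Hmu_e_three (hD : 1 - lam * (q 0 ^ 2 + q 1 ^ 2 + q 2 ^ 2) ≠ 0) :
    fderiv ℝ (Hmu lam k1 k2 k3 k4) q (e 3) = q 3 / (1 - lam * (q 0 ^ 2 + q 1 ^ 2 + q 2 ^ 2)) := by
  simp [(hasFDerivAt_Hmu hD).fderiv, e, div_eq_inv_mul]

end Hamiltonian

theorem stmt1 (lam k1 k2 k3 k4 : ℝ) :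
    ∀ q : Pt, 1 - lam * (q 0 ^ 2 + q 1 ^ 2 + q 2 ^ 2) > 0 →
      pb (Kxx lam k1 k2 k3 k4) (Hmu lam k1 k2 k3 k4) q = 0 := by
  intro q hq
  have hD := hq.ne'
  have hH := (hasFDerivAt_Hmu (k1 := k1) (k2 := k2) (k3 := k3) (k4 := k4) hD).differentiableAt
  have hx : DifferentiableAt ℝ (fun q : Pt => q 0) q := differentiableAt_apply 0 q
  have hp : DifferentiableAt ℝ (fun q : Pt => q 3) q := differentiableAt_apply 3 q
  have hT : HasDerivAt (fun t => t ^ 2) (2 * q 3) (q 3) := by simpa using hasDerivAt_pow 2 (q 3)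
  have hV : HasDerivAt (fun t => 2 * (k1 * t ^ 2 + k2 * t))
      (2 * (k1 * (2 * q 0) + k2)) (q 0) := by
    simpa using
      (((hasDerivAt_pow 2 _).const_mul k1).add ((hasDerivAt_id _).const_mul k2)).const_mul 2
  have hW : HasDerivAt (fun t => 2 * lam * t ^ 2) (2 * lam * (2 * q 0)) (q 0) := by
    simpa using (hasDerivAt_pow 2 (q 0)).const_mul (2 * lam)
  unfold Kxx
  rw [pb_add_left (by fun_prop) (by fun_prop), pb_add_left (by fun_prop) (by fun_prop),
    pb_mul_left (by fun_prop) hH, pb_self, pb_comp_left hT hp, pb_comp_left hV hx,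
    pb_comp_left hW hx, pb_coord_zero_left, pb_coord_three_left, fderiv_Hmu_e_zero hD,
    fderiv_Hmu_e_three hD]
  field_simp
  ring
end
end

section
/- For H_μ = (1/(1−λr²))·[ (px²+py²+pz²)/2 + k1 r² + k2 x + k3 y + k4 z ], the two commuting constants K_xx = px² + 2(k1x² + k2x) + 2λx²H_μ and K_yy = py² + 2(k1y² + k3y) + 2λy²H_μ satisfy {K_xx, K_yy} = 0. -/
noncomputable section

/-- K_yy = py² + 2(k1 y² + k3 y) + 2λ y² H_μ. -/
def Kyy (lam k1 k2 k3 k4 : ℝ) (q : Pt) : ℝ :=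
  q 4 ^ 2 + 2 * (k1 * q 1 ^ 2 + k3 * q 1) + 2 * lam * q 1 ^ 2 * Hmu lam k1 k2 k3 k4 q

/-- Coordinate projection as a continuous linear map. -/
def P (i : Fin 6) : Pt →L[ℝ] ℝ := ContinuousLinearMap.proj i

set_option maxHeartbeats 4000000 in
theorem stmt4 (lam k1 k2 k3 k4 : ℝ) :
    ∀ q : Pt, 1 - lam * (q 0 ^ 2 + q 1 ^ 2 + q 2 ^ 2) > 0 →
      pb (Kxx lam k1 k2 k3 k4) (Kyy lam k1 k2 k3 k4) q = 0 := by
  intro q hq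
  have hne : 1 - lam * (q 0 ^ 2 + q 1 ^ 2 + q 2 ^ 2) ≠ 0 := ne_of_gt hq
  have h : ∀ i : Fin 6, HasFDerivAt (fun q : Pt => q i) (P i) q := fun i => (P i).hasFDerivAt
  have hp : ∀ i : Fin 6, HasFDerivAt (fun q : Pt => q i ^ 2) ((2 * q i) • P i) q := by
    intro i
    have := (hasDerivAt_pow 2 (q i)).comp_hasFDerivAt q (h i)
    norm_num at this
    exact this
  have hD : HasFDerivAt (fun q : Pt => 1 - lam * (q 0 ^ 2 + q 1 ^ 2 + q 2 ^ 2)) _ q :=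
    (hasFDerivAt_const 1 q).sub
      ((((hp 0).add (hp 1)).add (hp 2)).const_mul lam)
  have hN : HasFDerivAt (fun q : Pt => (q 3 ^ 2 + q 4 ^ 2 + q 5 ^ 2) / 2
      + k1 * (q 0 ^ 2 + q 1 ^ 2 + q 2 ^ 2) + k2 * q 0 + k3 * q 1 + k4 * q 2) _ q :=
    ((((((hp 3).add (hp 4)).add (hp 5)).mul_const (2:ℝ)⁻¹).add
      ((((hp 0).add (hp 1)).add (hp 2)).const_mul k1)).add
      ((h 0).const_mul k2)).add ((h 1).const_mul k3) |>.add ((h 2).const_mul k4)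
  have hI : HasFDerivAt (fun q : Pt => (1 - lam * (q 0 ^ 2 + q 1 ^ 2 + q 2 ^ 2))⁻¹) _ q :=
    (hasDerivAt_inv hne).comp_hasFDerivAt q hD
  have hH : HasFDerivAt (Hmu lam k1 k2 k3 k4) _ q :=
    ((hasFDerivAt_const (1:ℝ) q).mul hI).mul hN
  have hKx : HasFDerivAt (Kxx lam k1 k2 k3 k4) _ q :=
    ((hp 3).add
      ((((hp 0).const_mul k1).add ((h 0).const_mul k2)).const_mul 2)).add
      (((hp 0).const_mul (2 * lam)).mul hH)
  have hKy : HasFDerivAt (Kyy lam k1 k2 k3 k4) _ q :=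
    ((hp 4).add
      ((((hp 1).const_mul k1).add ((h 1).const_mul k3)).const_mul 2)).add
      (((hp 1).const_mul (2 * lam)).mul hH)
  rw [pb, hKx.fderiv, hKy.fderiv]
  simp only [e, ContinuousLinearMap.add_apply, ContinuousLinearMap.sub_apply,
    ContinuousLinearMap.smul_apply, ContinuousLinearMap.coe_smul', Pi.smul_apply,
    smul_eq_mul, ContinuousLinearMap.zero_apply, ContinuousLinearMap.proj_apply, P,
    Pi.single_apply, Hmu, reduceIte]
  simp (config := { decide := true }) only [↓reduceIte]
  norm_num
  simp only [pow_two, mul_inv]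
  ring
end
end

section
/- The λ-dependent Fradkin-type integrals of H_μ = (1/(1−λr²))·[(px²+py²+pz²)/2 + k1r² + k2x + k3y + k4z] satisfy the algebraic identity x²·K_yy − 2xy·K_xy + y²·K_xx = (x·py − y·px)², where K_xx = px² + 2(k1x²+k2x) + 2λx²H_μ, K_yy = py² + 2(k1y²+k3y) + 2λy²H_μ, and K_xy = px·py + (2k1xy + k3x + k2y) + 2λxyH_μ. -/
theorem stmt19 (lam k1 k2 k3 k4 : ℝ) :
    ∀ x y z px py pz : ℝ, 1 - lam * (x ^ 2 + y ^ 2 + z ^ 2) > 0 →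
      let Hmu := (1 / (1 - lam * (x ^ 2 + y ^ 2 + z ^ 2))) *
        ((px ^ 2 + py ^ 2 + pz ^ 2) / 2 + k1 * (x ^ 2 + y ^ 2 + z ^ 2)
          + k2 * x + k3 * y + k4 * z)
      let Kxx := px ^ 2 + 2 * (k1 * x ^ 2 + k2 * x) + 2 * lam * x ^ 2 * Hmu
      let Kyy := py ^ 2 + 2 * (k1 * y ^ 2 + k3 * y) + 2 * lam * y ^ 2 * Hmu
      let Kxy := px * py + (2 * k1 * x * y + k3 * x + k2 * y) + 2 * lam * x * y * Hmu
      x ^ 2 * Kyy - 2 * x * y * Kxy + y ^ 2 * Kxx = (x * py - y * px) ^ 2 := by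
  intro x y z px py pz h
  simp only []
  ring
end
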